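/- arXiv:1405.4795 — 2 statements merged into one kernel-verified Lean document; each statement's English description precedes it below -/
import Mathlib

section
/- Let C ⊆ ℝ² be a compact convex body invariant under rotation by 120° about a point p ∈ C, and let {C₁, C₂, C₃} be any partition of C into three sets. For any x on the boundary of C, the maximum of the diameters of the Cᵢ is at least dist(p, x). -/
/-!
Let `ρ` be the rotation by `2π/3` about `p` and `d = dist p x`. The four points `p, x, ρ x, ρ² x`
lie in `C`; the last three form an equilateral triangle of side `√3 d` centred at `p`, so any two
of the four points are at distance at least `d`. By pigeonhole two of them lie in the same part,
whose diameter is therefore at least `d`.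
-/

open Complex Metric Set
open scoped Real

theorem exp_two_pi_I_div_three : exp (2 * π * I / 3) = -1 / 2 + √3 / 2 * I := by
  have h : 2 * π * I / 3 = ((π - π / 3 : ℝ) : ℂ) * I := by push_cast; ring
  rw [h, exp_mul_I, ← ofReal_cos, ← ofReal_sin, Real.cos_pi_sub, Real.sin_pi_sub,
    Real.cos_pi_div_three, Real.sin_pi_div_three]
  push_cast; ring

theorem norm_exp_two_pi_I_div_three : ‖exp (2 * π * I / 3)‖ = 1 := by
  rw [show 2 * π * I / 3 = ((2 * π / 3 : ℝ) : ℂ) * I by push_cast; ring]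
  exact norm_exp_ofReal_mul_I _

theorem exp_two_pi_I_div_three_pow_three : exp (2 * π * I / 3) ^ 3 = 1 := by
  rw [← exp_nat_mul, show ((3 : ℕ) : ℂ) * (2 * π * I / 3) = 2 * π * I by push_cast; ring,
    exp_two_pi_mul_I]

theorem norm_one_sub_exp_two_pi_I_div_three : ‖1 - exp (2 * π * I / 3)‖ = √3 := by
  rw [exp_two_pi_I_div_three, norm_eq_sqrt_sq_add_sq]
  congr 1
  simp only [sub_re, one_re, add_re, div_ofNat_re, neg_re, mul_re, ofReal_re, I_re, mul_zero,
    div_ofNat_im, ofReal_im, zero_div, I_im, mul_one, sub_self, add_zero, sub_im, one_im, add_im,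
    neg_im, neg_zero, mul_im, zero_add, zero_sub, even_two, Even.neg_pow]
  ring_nf
  norm_num

noncomputable def rotateThird (p z : ℂ) : ℂ := p + exp (2 * π * I / 3) * (z - p)

section rotateThird

variable (p z : ℂ)

theorem rotateThird_rotateThird_rotateThird :
    rotateThird p (rotateThird p (rotateThird p z)) = z := by
  have h := exp_two_pi_I_div_three_pow_three
  unfold rotateThird
  linear_combination (z - p) * h

theorem dist_center_rotateThird : dist p (rotateThird p z) = dist p z := by
  rw [rotateThird, dist_eq, dist_eq, sub_add_cancel_left, norm_neg, norm_mul,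
    norm_exp_two_pi_I_div_three, one_mul, norm_sub_rev]

theorem dist_rotateThird : dist z (rotateThird p z) = √3 * dist p z := by
  rw [rotateThird, dist_eq, dist_eq, show z - (p + exp (2 * π * I / 3) * (z - p)) =
    (1 - exp (2 * π * I / 3)) * (z - p) by ring, norm_mul, norm_one_sub_exp_two_pi_I_div_three,
    norm_sub_rev]

theorem dist_rotateThird_rotateThird :
    dist z (rotateThird p (rotateThird p z)) = √3 * dist p z := by
  have h := dist_rotateThird p (rotateThird p (rotateThird p z))
  rwa [rotateThird_rotateThird_rotateThird, dist_center_rotateThird, dist_center_rotateThird,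
    dist_comm] at h

end rotateThird

theorem exists_le_diam_of_pairwise_le_dist {α ι κ : Type*} [PseudoMetricSpace α] [Fintype ι]
    [Fintype κ] (hcard : Fintype.card κ < Fintype.card ι) {d : ℝ} {f : ι → α}
    (hf : Pairwise fun i j => d ≤ dist (f i) (f j)) {S : κ → Set α}
    (hS : ∀ k, Bornology.IsBounded (S k)) (hcover : ∀ i, ∃ k, f i ∈ S k) :
    ∃ k, d ≤ diam (S k) := by
  choose g hg using hcover
  obtain ⟨i, j, hij, hgij⟩ := Fintype.exists_ne_map_eq_of_card_lt g hcard
  exact ⟨g i, (hf hij).trans (dist_le_diam_of_mem (hS _) (hg i) (hgij ▸ hg j))⟩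

theorem le_max_diam_of_four_points {α : Type*} [PseudoMetricSpace α] {S₁ S₂ S₃ : Set α}
    (h₁ : Bornology.IsBounded S₁) (h₂ : Bornology.IsBounded S₂) (h₃ : Bornology.IsBounded S₃)
    {a b c e : α} (ha : a ∈ S₁ ∪ S₂ ∪ S₃) (hb : b ∈ S₁ ∪ S₂ ∪ S₃) (hc : c ∈ S₁ ∪ S₂ ∪ S₃)
    (he : e ∈ S₁ ∪ S₂ ∪ S₃) {d : ℝ} (hab : d ≤ dist a b) (hac : d ≤ dist a c)
    (hae : d ≤ dist a e) (hbc : d ≤ dist b c) (hbe : d ≤ dist b e) (hce : d ≤ dist c e) :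
    d ≤ max (max (diam S₁) (diam S₂)) (diam S₃) := by
  have hcover : ∀ i, ∃ k, ![a, b, c, e] i ∈ ![S₁, S₂, S₃] k := by
    intro i
    have hi : ![a, b, c, e] i ∈ S₁ ∪ S₂ ∪ S₃ := by fin_cases i <;> assumption
    rcases hi with (hi | hi) | hi
    exacts [⟨0, hi⟩, ⟨1, hi⟩, ⟨2, hi⟩]
  have hpair : Pairwise fun i j => d ≤ dist (![a, b, c, e] i) (![a, b, c, e] j) := by
    intro i j hij
    fin_cases i <;> fin_cases j <;> simp_all [dist_comm]
  obtain ⟨k, hk⟩ := exists_le_diam_of_pairwise_le_dist (by simp) hpair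
    (S := ![S₁, S₂, S₃]) (fun k => by fin_cases k <;> assumption) hcover
  fin_cases k
  exacts [hk.trans (le_max_of_le_left (le_max_left _ _)),
    hk.trans (le_max_of_le_left (le_max_right _ _)), hk.trans (le_max_right _ _)]

theorem stmt3_general (C : Set ℂ) (p : ℂ)
    (hC : IsCompact C)
    (hp : p ∈ C)
    (hsym : (fun y => p + Complex.exp (2 * Real.pi * Complex.I / 3) * (y - p)) '' C = C)
    (C₁ C₂ C₃ : Set ℂ) (hcover : C = C₁ ∪ C₂ ∪ C₃)
    (x : ℂ) (hx : x ∈ frontier C) :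
    max (max (Metric.diam C₁) (Metric.diam C₂)) (Metric.diam C₃) ≥ dist p x := by
  have hrot : ∀ y ∈ C, rotateThird p y ∈ C := fun y hy => hsym ▸ mem_image_of_mem _ hy
  have hxC : x ∈ C := hC.isClosed.frontier_subset hx
  have hbdd := hC.isBounded
  have hd : dist p x ≤ √3 * dist p x :=
    le_mul_of_one_le_left dist_nonneg (Real.one_le_sqrt.mpr (by norm_num))
  subst hcover
  refine le_max_diam_of_four_points (hbdd.subset (subset_union_left.trans subset_union_left))
    (hbdd.subset (subset_union_right.trans subset_union_left)) (hbdd.subset subset_union_right)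
    hp hxC (hrot x hxC) (hrot _ (hrot x hxC)) le_rfl
    (dist_center_rotateThird p x).ge ?_ ?_ ?_ ?_
  · rw [dist_center_rotateThird, dist_center_rotateThird]
  · rwa [dist_rotateThird]
  · rwa [dist_rotateThird_rotateThird]
  · rwa [dist_rotateThird, dist_center_rotateThird]

/-- For a 3-rotationally symmetric planar convex body `C` with center `p`,
any partition of `C` into three sets, and any boundary point `x`, the maximum of the
diameters of the parts is at least `dist p x`. -/
theorem stmt3 (C : Set ℂ) (p : ℂ)
    (hC : IsCompact C) (hconv : Convex ℝ C) (hint : (interior C).Nonempty)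
    (hp : p ∈ C)
    (hsym : (fun y => p + Complex.exp (2 * Real.pi * Complex.I / 3) * (y - p)) '' C = C)
    (C₁ C₂ C₃ : Set ℂ) (hcover : C = C₁ ∪ C₂ ∪ C₃)
    (h1 : C₁ ⊆ C) (h2 : C₂ ⊆ C) (h3 : C₃ ⊆ C)
    (x : ℂ) (hx : x ∈ frontier C) :
    max (max (Metric.diam C₁) (Metric.diam C₂)) (Metric.diam C₃) ≥ dist p x :=
  stmt3_general C p hC hp hsym C₁ C₂ C₃ hcover x hx
end

section
/- Define, for a ∈ [0, 2^{1/2}·3^{−3/4}], f(a) = (1/3)·(4√3 + 18a² − 3a·√(12√3 + 27a²))^{1/2} and g(a) = (1/2)·(3a² + 4/√3)^{1/2}. Then f is strictly decreasing, g is strictly increasing, f(0) > g(0), and f(2^{1/2}·3^{−3/4}) < g(2^{1/2}·3^{−3/4}); hence there is a unique a₀ in the open interval with f(a₀) = g(a₀). -/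
open Set

private lemma mul_sqrt_eq (c p : ℝ) (hc : 0 ≤ c) :
    c * Real.sqrt p = Real.sqrt (c^2 * p) := by
  rw [Real.sqrt_mul (sq_nonneg c), Real.sqrt_sq hc]

private lemma key (r a : ℝ) (hr : r^2 = 3) (hr0 : 0 < r) (ha : 0 ≤ a)
    (ht : a^2 ≤ 2*r/9) :
    a * Real.sqrt (12*r + 27*a^2) ≤ r + (9/2)*a^2 := by
  rw [mul_sqrt_eq _ _ ha]
  have h1 : a^2*(12*r+27*a^2) ≤ (r + (9/2)*a^2)^2 := by
    nlinarith [mul_nonneg (sub_nonneg.2 ht) (by positivity : (0:ℝ) ≤ a^2 + 2*r/3)]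
  calc Real.sqrt (a^2*(12*r+27*a^2)) ≤ Real.sqrt ((r + (9/2)*a^2)^2) :=
        Real.sqrt_le_sqrt h1
    _ = r + (9/2)*a^2 := Real.sqrt_sq (by positivity)

private lemma key' (r a : ℝ) (hr : r^2 = 3) (hr0 : 0 < r) (ha : 0 ≤ a)
    (ht : a^2 < 2*r/9) :
    a * Real.sqrt (12*r + 27*a^2) < r + (9/2)*a^2 := by
  rw [mul_sqrt_eq _ _ ha]
  have h1 : a^2*(12*r+27*a^2) < (r + (9/2)*a^2)^2 := by
    nlinarith [mul_pos (sub_pos.2 ht) (by positivity : (0:ℝ) < a^2 + 2*r/3)]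
  calc Real.sqrt (a^2*(12*r+27*a^2)) < Real.sqrt ((r + (9/2)*a^2)^2) :=
        Real.sqrt_lt_sqrt (by nlinarith [sq_nonneg a]) h1
    _ = r + (9/2)*a^2 := Real.sqrt_sq (by positivity)

/-- The inner expression of `f` is strictly decreasing on `[0, A]`. -/
private lemma fdec (r x y : ℝ) (hr : r^2 = 3) (hr0 : 0 < r) (hx : 0 ≤ x)
    (hxy : x < y) (hy : y^2 ≤ 2*r/9) :
    4*r + 18*y^2 - 3*y*Real.sqrt (12*r+27*y^2)
      < 4*r + 18*x^2 - 3*x*Real.sqrt (12*r+27*x^2) := by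
  set sx := Real.sqrt (12*r+27*x^2) with hsxdef
  set sy := Real.sqrt (12*r+27*y^2) with hsydef
  have hy0 : 0 < y := lt_of_le_of_lt hx hxy
  have hx2 : x^2 < 2*r/9 := by nlinarith
  have hsx0 : 0 ≤ sx := Real.sqrt_nonneg _
  have hsy0 : 0 < sy := Real.sqrt_pos.2 (by nlinarith [sq_nonneg y])
  have hsx2 : sx^2 = 12*r+27*x^2 := Real.sq_sqrt (by nlinarith [sq_nonneg x])
  have hsy2 : sy^2 = 12*r+27*y^2 := Real.sq_sqrt (by nlinarith [sq_nonneg y])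
  have kx : x * sx < r + (9/2)*x^2 := key' r x hr hr0 hx hx2
  have ky : y * sy ≤ r + (9/2)*y^2 := key r y hr hr0 hy0.le hy
  have hv : 0 < y*sy + x*sx := by
    have : 0 < y*sy := mul_pos hy0 hsy0
    nlinarith [mul_nonneg hx hsx0]
  have h1 : (y*sy - x*sx) * (y*sy + x*sx)
      = 6*(y^2-x^2)*(2*r + (9/2)*(x^2+y^2)) := by
    have e : (y*sy - x*sx) * (y*sy + x*sx) = y^2*sy^2 - x^2*sx^2 := by ring
    rw [e, hsx2, hsy2]; ring
  have hpos : 0 < y^2 - x^2 := by nlinarith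
  have hvD : y*sy + x*sx < 2*r + (9/2)*(x^2+y^2) := by linarith
  have h2 : 6*(y^2-x^2)*(y*sy + x*sx) < (y*sy - x*sx)*(y*sy + x*sx) := by
    rw [h1]
    exact mul_lt_mul_of_pos_left hvD (by positivity)
  have h3 : 6*(y^2-x^2) < y*sy - x*sx :=
    lt_of_mul_lt_mul_right h2 hv.le
  nlinarith

/-- With `f(a) = (1/3)·(4√3 + 18a² − 3a·√(12√3 + 27a²))^{1/2}` and
`g(a) = (1/2)·(3a² + 4/√3)^{1/2}` on `[0, 2^{1/2}·3^{−3/4}]`, `f` is strictly decreasing,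
`g` is strictly increasing, `f 0 > g 0`, `f A < g A` at the right endpoint `A`, and there is
a unique crossing point `a₀` in the open interval with `f a₀ = g a₀`. -/
theorem stmt15
    (f g : ℝ → ℝ)
    (hf : f = fun a => (1 / 3) * Real.sqrt (4 * Real.sqrt 3 + 18 * a ^ 2
        - 3 * a * Real.sqrt (12 * Real.sqrt 3 + 27 * a ^ 2)))
    (hg : g = fun a => (1 / 2) * Real.sqrt (3 * a ^ 2 + 4 / Real.sqrt 3))
    (A : ℝ) (hA : A = Real.sqrt 2 * (3 : ℝ) ^ (-(3 : ℝ) / 4)) :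
    StrictAntiOn f (Icc 0 A) ∧ StrictMonoOn g (Icc 0 A) ∧
      f 0 > g 0 ∧ f A < g A ∧
      ∃! a₀ : ℝ, a₀ ∈ Ioo 0 A ∧ f a₀ = g a₀ := by
  set r := Real.sqrt 3 with hrdef
  have hr : r^2 = 3 := Real.sq_sqrt (by norm_num)
  have hr0 : 0 < r := Real.sqrt_pos.2 (by norm_num)
  have hApos : 0 < A := by rw [hA]; positivity
  have hA2 : A^2 = 2*r/9 := by
    have h1 : ((3:ℝ) ^ (-(3:ℝ)/4))^2 = (3:ℝ) ^ (-(3:ℝ)/2) := by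
      rw [← Real.rpow_natCast ((3:ℝ) ^ (-(3:ℝ)/4)) 2,
        ← Real.rpow_mul (by norm_num : (0:ℝ) ≤ 3)]
      norm_num
    have h2 : (3:ℝ) ^ (-(3:ℝ)/2) = r / 9 := by
      rw [show (-(3:ℝ)/2) = (-2 : ℝ) + (1/2 : ℝ) by norm_num,
        Real.rpow_add (by norm_num : (0:ℝ) < 3), ← Real.sqrt_eq_rpow]
      have : (3:ℝ) ^ (-2 : ℝ) = 1/9 := by
        rw [show ((-2:ℝ)) = ((-2 : ℤ) : ℝ) by norm_num, Real.rpow_intCast]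
        norm_num
      rw [this, ← hrdef]; ring
    rw [hA, mul_pow, Real.sq_sqrt (by norm_num : (0:ℝ) ≤ 2), h1, h2]
    ring
  -- strict antitonicity of f
  have hanti : StrictAntiOn f (Icc 0 A) := by
    intro x hx y hy hxy
    rw [hf]
    simp only
    have hy2 : y^2 ≤ 2*r/9 := by
      rw [← hA2]; nlinarith [hx.1, hy.2, hxy]
    have hdec := fdec r x y hr hr0 hx.1 hxy hy2
    have hky := key r y hr hr0 (le_trans hx.1 hxy.le) hy2
    have hhy0 : 0 ≤ 4*r + 18*y^2 - 3*y*Real.sqrt (12*r+27*y^2) := by nlinarith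
    have := Real.sqrt_lt_sqrt hhy0 hdec
    have h13 : (0:ℝ) < 1/3 := by norm_num
    calc (1/3) * Real.sqrt (4*r + 18*y^2 - 3*y*Real.sqrt (12*r+27*y^2))
        < (1/3) * Real.sqrt (4*r + 18*x^2 - 3*x*Real.sqrt (12*r+27*x^2)) := by
          exact mul_lt_mul_of_pos_left this h13
      _ = _ := by norm_num
  -- strict monotonicity of g
  have hmono : StrictMonoOn g (Icc 0 A) := by
    intro x hx y hy hxy
    rw [hg]
    simp only
    have harg : 3*x^2 + 4/r < 3*y^2 + 4/r := by nlinarith [hx.1]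
    have h0 : 0 ≤ 3*x^2 + 4/r := by positivity
    have := Real.sqrt_lt_sqrt h0 harg
    linarith
  -- f 0 > g 0
  have h0 : g 0 < f 0 := by
    rw [hf, hg]
    simp only
    have a1 : 3*(0:ℝ)^2 + 4/r = 4/r := by ring
    have a2 : 4*r + 18*(0:ℝ)^2 - 3*0*Real.sqrt (12*r+27*(0:ℝ)^2) = 4*r := by ring
    rw [a1, a2, mul_sqrt_eq _ _ (by norm_num : (0:ℝ) ≤ (1/2)),
        mul_sqrt_eq _ _ (by norm_num : (0:ℝ) ≤ (1/3))]
    apply Real.sqrt_lt_sqrt (by positivity)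
    have hd : 4/r = 4*r/3 := by
      rw [div_eq_div_iff hr0.ne' (by norm_num : (3:ℝ) ≠ 0)]; nlinarith
    rw [hd]; nlinarith
  -- f A < g A
  have hA' : f A < g A := by
    rw [hf, hg]
    simp only
    have e1 : 12*r + 27*A^2 = 18*r := by rw [hA2]; ring
    have e2 : A * Real.sqrt (18*r) = 2*r := by
      rw [mul_sqrt_eq _ _ hApos.le,
        show A^2*(18*r) = (2*r)^2 by rw [hA2]; nlinarith]
      exact Real.sqrt_sq (by positivity)
    have e3 : 4*r + 18*A^2 - 3*A*Real.sqrt (12*r + 27*A^2) = 2*r := by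
      rw [e1, show 3*A*Real.sqrt (18*r) = 3*(A*Real.sqrt (18*r)) by ring, e2, hA2]
      ring
    have e4 : 3*A^2 + 4/r = 2*r := by
      rw [hA2]
      field_simp
      nlinarith
    rw [e3, e4]
    have : 0 < Real.sqrt (2*r) := Real.sqrt_pos.2 (by positivity)
    linarith
  refine ⟨hanti, hmono, h0, hA', ?_⟩
  -- unique crossing point
  have hcf : Continuous f := by rw [hf]; fun_prop
  have hcg : Continuous g := by rw [hg]; fun_prop
  set F : ℝ → ℝ := fun a => f a - g a with hFdef
  have hcF : Continuous F := hcf.sub hcg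
  have hF0 : 0 < F 0 := by simp [hFdef]; linarith
  have hFA : F A < 0 := by simp [hFdef]; linarith
  obtain ⟨c, hcmem, hc0⟩ :=
    intermediate_value_Icc' hApos.le hcF.continuousOn ⟨hFA.le, hF0.le⟩
  have hcne0 : c ≠ 0 := by rintro rfl; rw [hc0] at hF0; exact lt_irrefl 0 hF0
  have hcneA : c ≠ A := by rintro rfl; rw [hc0] at hFA; exact lt_irrefl 0 hFA
  have hcIoo : c ∈ Ioo 0 A :=
    ⟨hcmem.1.lt_of_ne (Ne.symm hcne0), hcmem.2.lt_of_ne hcneA⟩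
  have hFanti : StrictAntiOn F (Icc 0 A) := by
    intro x hx y hy hxy
    have := hanti hx hy hxy
    have := hmono hx hy hxy
    simp only [hFdef]
    linarith
  refine ⟨c, ⟨hcIoo, by simpa [hFdef, sub_eq_zero] using hc0⟩, ?_⟩
  rintro b ⟨hbIoo, hbeq⟩
  apply hFanti.injOn (Ioo_subset_Icc_self hbIoo) hcmem
  rw [hc0]
  simp [hFdef, hbeq]
end
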